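/- arXiv:2412.00604 — 3 statements merged into one kernel-verified Lean document; each statement's English description precedes it below -/
import Mathlib

section
/- If g : ℝ → ℝ is continuous and periodic with period T > 0, and w is an integrable windowing function, then the windowed time average J_w(M) = (1/M) ∫₀^M w(t/M) g(t) dt converges, as M → ∞, to J = (1/T) ∫₀^T g(t) dt. -/
open Real MeasureTheory Filter Set Polynomial

/-!
Subtracting the mean `J` leaves `h = g - J`, a continuous periodic function with zero mean, so
both `h` and its primitive are bounded. After the substitution `t = M s` the error is
`∫₀¹ w(s) h(M s) ds`. For a `C¹` weight, integration by parts against the bounded primitive makes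
it `O(1/M)`. The error depends on `w` with Lipschitz constant `sup |h|` in the `L¹(0,1)` norm, and
polynomials are dense there, which handles a general integrable `w`.
-/

namespace Function.Periodic

variable {h : ℝ → ℝ} {T : ℝ}

theorem exists_abs_le (hper : Periodic h T) (hT : T ≠ 0) (hh : Continuous h) :
    ∃ C, ∀ t, |h t| ≤ C := by
  obtain ⟨C, hC⟩ := (hper.isBounded_of_continuous hT hh).exists_norm_le
  exact ⟨C, fun t => hC _ (mem_range_self t)⟩

theorem exists_abs_primitive_le (hper : Periodic h T) (hT : T ≠ 0) (hh : Continuous h)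
    (hmean : ∫ x in (0:ℝ)..T, h x = 0) : ∃ D, ∀ t, |∫ x in (0:ℝ)..t, h x| ≤ D := by
  have hH : Periodic (fun t => ∫ x in (0:ℝ)..t, h x) T := fun t => by
    dsimp only
    rw [← intervalIntegral.integral_add_adjacent_intervals (hh.intervalIntegrable 0 t)
      (hh.intervalIntegrable t (t + T)), hper.intervalIntegral_add_eq t 0, zero_add, hmean,
      add_zero]
  exact hH.exists_abs_le hT (intervalIntegral.continuous_primitive (hh.intervalIntegrable ·) 0)

end Function.Periodic

theorem IntervalIntegrable.exists_polynomial_integral_abs_sub_le {w : ℝ → ℝ} {a b : ℝ}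
    (hab : a ≤ b) (hw : IntervalIntegrable w volume a b) {ε : ℝ} (hε : 0 < ε) :
    ∃ p : ℝ[X], ∫ s in a..b, |w s - p.eval s| ≤ ε := by
  have hwIoc : Integrable w (volume.restrict (Ioc a b)) :=
    (intervalIntegrable_iff_integrableOn_Ioc_of_le hab).mp hw
  obtain ⟨φ, -, hwφ, hφ, -⟩ := hwIoc.exists_hasCompactSupport_integral_sub_le (half_pos hε)
  set δ := ε / 2 / (b - a + 1)
  have hδ : 0 < δ := by positivity
  obtain ⟨p, hp⟩ := exists_polynomial_near_of_continuousOn a b φ hφ.continuousOn δ hδ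
  have hφi := hφ.intervalIntegrable (μ := volume) a b
  have hpi := (p.continuous (R := ℝ)).intervalIntegrable (μ := volume) a b
  have hφp : ∫ s in a..b, |φ s - p.eval s| ≤ ε / 2 :=
    calc ∫ s in a..b, |φ s - p.eval s| ≤ ∫ _ in a..b, δ :=
          intervalIntegral.integral_mono_on hab (hφi.sub hpi).abs intervalIntegrable_const
            fun s hs => by rw [abs_sub_comm]; exact (hp s hs).le
      _ = δ * (b - a) := by rw [intervalIntegral.integral_const, smul_eq_mul, mul_comm]
      _ ≤ δ * (b - a + 1) := by gcongr; linarith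
      _ = ε / 2 := div_mul_cancel₀ _ (by linarith)
  have hwφ' : ∫ s in a..b, |w s - φ s| ≤ ε / 2 := by
    simpa only [intervalIntegral.integral_of_le hab, Real.norm_eq_abs] using hwφ
  refine ⟨p, ?_⟩
  calc ∫ s in a..b, |w s - p.eval s|
      ≤ ∫ s in a..b, (|w s - φ s| + |φ s - p.eval s|) :=
        intervalIntegral.integral_mono_on hab (hw.sub hpi).abs
          ((hw.sub hφi).abs.add (hφi.sub hpi).abs) fun s _ => abs_sub_le _ _ _
    _ = (∫ s in a..b, |w s - φ s|) + ∫ s in a..b, |φ s - p.eval s| :=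
        intervalIntegral.integral_add (hw.sub hφi).abs (hφi.sub hpi).abs
    _ ≤ ε := by linarith

theorem one_div_mul_integral_comp_div_mul {M : ℝ} (hM : M ≠ 0) (w g : ℝ → ℝ) :
    (1 / M) * ∫ t in (0:ℝ)..M, w (t / M) * g t = ∫ s in (0:ℝ)..1, w s * g (M * s) := by
  have := intervalIntegral.integral_comp_mul_left (fun t => w (t / M) * g t) hM (a := 0) (b := 1)
  simp only [mul_div_cancel_left₀ _ hM, mul_zero, mul_one, smul_eq_mul] at this
  rw [this, one_div]

theorem abs_integral_mul_le_mul_integral_abs {u k : ℝ → ℝ} {a b C : ℝ} (hab : a ≤ b)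
    (hu : IntervalIntegrable u volume a b) (hk : ∀ s, |k s| ≤ C) :
    |∫ s in a..b, u s * k s| ≤ C * ∫ s in a..b, |u s| := by
  rw [← Real.norm_eq_abs, ← intervalIntegral.integral_const_mul]
  refine intervalIntegral.norm_integral_le_of_norm_le hab (ae_of_all _ fun s _ => ?_)
    (hu.abs.const_mul C)
  rw [Real.norm_eq_abs, abs_mul, mul_comm]
  exact mul_le_mul_of_nonneg_right (hk s) (abs_nonneg _)

/-- Integration by parts against `s ↦ (∫₀^{Ms} h) / M`, whose derivative is `h (M s)`. -/
theorem abs_integral_mul_comp_mul_le_of_hasDerivAt {h : ℝ → ℝ} {D : ℝ} (hh : Continuous h)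
    (hD : ∀ t, |∫ x in (0:ℝ)..t, h x| ≤ D) {ψ ψ' : ℝ → ℝ} (hψ : ∀ s, HasDerivAt ψ (ψ' s) s)
    (hψ' : Continuous ψ') {M : ℝ} (hM : 0 < M) :
    |∫ s in (0:ℝ)..1, ψ s * h (M * s)| ≤ D * (|ψ 1| + ∫ s in (0:ℝ)..1, |ψ' s|) / M := by
  set H : ℝ → ℝ := fun s => (∫ x in (0:ℝ)..M * s, h x) / M
  have hH : ∀ s, HasDerivAt H (h (M * s)) s := fun s => by
    have := ((hh.integral_hasStrictDerivAt 0 (M * s)).hasDerivAt.comp s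
      ((hasDerivAt_id s).const_mul M)).div_const M
    simpa [H, hM.ne'] using this
  have hHD : ∀ s, |H s| ≤ D / M := fun s => by
    rw [abs_div, abs_of_pos hM]
    exact div_le_div_of_nonneg_right (hD _) hM.le
  rw [intervalIntegral.integral_mul_deriv_eq_deriv_mul (fun s _ => hψ s) (fun s _ => hH s)
    (hψ'.intervalIntegrable 0 1) ((hh.comp (continuous_const_mul M)).intervalIntegrable 0 1)]
  have hH0 : H 0 = 0 := by simp [H]
  calc |ψ 1 * H 1 - ψ 0 * H 0 - ∫ s in (0:ℝ)..1, ψ' s * H s|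
      ≤ |ψ 1| * |H 1| + |∫ s in (0:ℝ)..1, ψ' s * H s| := by
        rw [hH0, mul_zero, sub_zero, ← abs_mul]; exact abs_sub _ _
    _ ≤ |ψ 1| * (D / M) + D / M * ∫ s in (0:ℝ)..1, |ψ' s| := by
        gcongr
        exacts [hHD 1, abs_integral_mul_le_mul_integral_abs zero_le_one
          (hψ'.intervalIntegrable 0 1) hHD]
    _ = D * (|ψ 1| + ∫ s in (0:ℝ)..1, |ψ' s|) / M := by ring

theorem tendsto_integral_mul_comp_mul_atTop_of_abs_primitive_le {h : ℝ → ℝ} {C D : ℝ}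
    (hh : Continuous h) (hC : ∀ t, |h t| ≤ C) (hD : ∀ t, |∫ x in (0:ℝ)..t, h x| ≤ D)
    {w : ℝ → ℝ} (hw : IntervalIntegrable w volume 0 1) :
    Tendsto (fun M => ∫ s in (0:ℝ)..1, w s * h (M * s)) atTop (nhds 0) := by
  rw [Metric.tendsto_nhds]
  intro ε hε
  have hC0 : 0 ≤ C := (abs_nonneg _).trans (hC 0)
  obtain ⟨p, hp⟩ := hw.exists_polynomial_integral_abs_sub_le zero_le_one
    (by positivity : 0 < ε / 2 / (C + 1))
  have hpw : C * ∫ s in (0:ℝ)..1, |w s - p.eval s| ≤ ε / 2 :=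
    calc C * ∫ s in (0:ℝ)..1, |w s - p.eval s| ≤ (C + 1) * (ε / 2 / (C + 1)) := by
          gcongr
          · exact intervalIntegral.integral_nonneg zero_le_one fun s _ => abs_nonneg _
          · linarith
      _ = ε / 2 := mul_div_cancel₀ _ (by linarith)
  have hK : Tendsto (fun M => D * (|p.eval 1| + ∫ s in (0:ℝ)..1, |p.derivative.eval s|) / M)
      atTop (nhds 0) := tendsto_const_nhds.div_atTop tendsto_id
  filter_upwards [hK.eventually (gt_mem_nhds (half_pos hε)), eventually_gt_atTop 0]
    with M hKM hM
  have hpi := (p.continuous (R := ℝ)).intervalIntegrable (μ := volume) 0 1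
  have hhM : ContinuousOn (fun s => h (M * s)) (uIcc 0 1) :=
    (hh.comp (continuous_const_mul M)).continuousOn
  have hsplit : ∫ s in (0:ℝ)..1, w s * h (M * s) =
      (∫ s in (0:ℝ)..1, (w s - p.eval s) * h (M * s)) +
        ∫ s in (0:ℝ)..1, p.eval s * h (M * s) := by
    rw [← intervalIntegral.integral_add ((hw.sub hpi).mul_continuousOn hhM)
      (hpi.mul_continuousOn hhM)]
    simp only [sub_mul, sub_add_cancel]
  rw [Real.dist_0_eq_abs, hsplit]
  calc _ ≤ |∫ s in (0:ℝ)..1, (w s - p.eval s) * h (M * s)| +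
        |∫ s in (0:ℝ)..1, p.eval s * h (M * s)| := abs_add_le _ _
    _ < ε / 2 + ε / 2 := add_lt_add_of_le_of_lt
        ((abs_integral_mul_le_mul_integral_abs zero_le_one (hw.sub hpi) fun s => hC _).trans hpw)
        ((abs_integral_mul_comp_mul_le_of_hasDerivAt hh hD p.hasDerivAt
          p.derivative.continuous hM).trans_lt hKM)
    _ = ε := add_halves ε

theorem windowed_average_converges_to_period_average_general
    (g : ℝ → ℝ) (T : ℝ) (hT : 0 < T) (hg : Continuous g)
    (hper : Function.Periodic g T)
    (w : ℝ → ℝ) (hwint : Integrable w)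
    (hw1 : (∫ s in (0:ℝ)..1, w s) = 1) :
    Tendsto (fun M : ℝ => (1 / M) * ∫ t in (0:ℝ)..M, w (t / M) * g t)
      atTop (nhds ((1 / T) * ∫ t in (0:ℝ)..T, g t)) := by
  set J := (1 / T) * ∫ t in (0:ℝ)..T, g t
  have hh : Continuous fun t => g t - J := hg.sub continuous_const
  have hhper : Function.Periodic (fun t => g t - J) T := fun t => by simp only [hper t]
  have hmean : ∫ t in (0:ℝ)..T, (g t - J) = 0 := by
    rw [intervalIntegral.integral_sub (hg.intervalIntegrable 0 T) intervalIntegrable_const,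
      intervalIntegral.integral_const, smul_eq_mul, sub_zero]
    simp only [J]
    field_simp
    ring
  obtain ⟨C, hC⟩ := hhper.exists_abs_le hT.ne' hh
  obtain ⟨D, hD⟩ := hhper.exists_abs_primitive_le hT.ne' hh hmean
  have hw := hwint.intervalIntegrable (a := 0) (b := 1)
  have hlim := tendsto_const_nhds (x := J).add
    (tendsto_integral_mul_comp_mul_atTop_of_abs_primitive_le hh hC hD hw)
  rw [add_zero] at hlim
  refine hlim.congr' ?_
  filter_upwards [eventually_gt_atTop 0] with M hM
  have hgM : ContinuousOn (fun s => g (M * s)) (uIcc 0 1) :=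
    (hg.comp (continuous_const_mul M)).continuousOn
  rw [one_div_mul_integral_comp_div_mul hM.ne']
  simp only [mul_sub]
  rw [intervalIntegral.integral_sub (hw.mul_continuousOn hgM) (hw.mul_const J),
    intervalIntegral.integral_mul_const, hw1, one_mul, add_sub_cancel]

theorem windowed_average_converges_to_period_average
    (g : ℝ → ℝ) (T : ℝ) (hT : 0 < T) (hg : Continuous g)
    (hper : Function.Periodic g T)
    (w : ℝ → ℝ) (hwint : Integrable w)
    (hw0 : ∀ s : ℝ, s ∉ Set.Ioo (0:ℝ) 1 → w s = 0)
    (hw1 : (∫ s in (0:ℝ)..1, w s) = 1) :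
    Tendsto (fun M : ℝ => (1 / M) * ∫ t in (0:ℝ)..M, w (t / M) * g t)
      atTop (nhds ((1 / T) * ∫ t in (0:ℝ)..T, g t)) :=
  windowed_average_converges_to_period_average_general g T hT hg hper w hwint hw1
end

section
/- Let h : ℝ → ℝ be continuous with period 1 and mean zero (∫₀¹ h = 0), and let w : ℝ → ℝ be a C¹ windowing function with w(0) = w(1) = 0. Then |∫₀¹ w(s) h(ks) ds| ≤ C/k for every positive integer k, where C = ‖w'‖_∞ · sup_{x} |∫₀^x h(s) ds|. -/
open Set

/-!
Let `H(x) = ∫₀ˣ h`. Since `h` has mean zero, `H` is `1`-periodic, hence bounded, and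
`s ↦ k⁻¹ H(ks)` is an antiderivative of `s ↦ h(ks)`. Integrating by parts against `w`, whose
boundary values vanish, moves the derivative onto `w` and produces the factor `1/k`:
`∫₀¹ w(s) h(ks) ds = -(1/k) ∫₀¹ w'(s) H(ks) ds`.
-/

namespace Function.Periodic

variable {E : Type*} [NormedAddCommGroup E] [NormedSpace ℝ E] {f : ℝ → E} {T : ℝ}

theorem periodic_intervalIntegral_of_integral_eq_zero (hf : Periodic f T)
    (h_int : ∀ t₁ t₂, IntervalIntegrable f MeasureTheory.volume t₁ t₂)
    (h_zero : ∫ x in 0..T, f x = 0) :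
    Periodic (fun t => ∫ x in 0..t, f x) T := fun t => by
  simpa [h_zero] using hf.intervalIntegral_add_eq_add 0 t h_int

end Function.Periodic

namespace intervalIntegral

variable {w h H : ℝ → ℝ} {a b k : ℝ}

theorem integral_mul_comp_mul_eq_neg_inv_mul (hk : k ≠ 0) (hw : ContDiff ℝ 1 w)
    (hwa : w a = 0) (hwb : w b = 0) (hH : ∀ x, HasDerivAt H (h x) x) (hh : Continuous h) :
    ∫ s in a..b, w s * h (k * s) = -(k⁻¹ * ∫ s in a..b, deriv w s * H (k * s)) := by
  have hv : ∀ x, HasDerivAt (fun s => k⁻¹ * H (k * s)) (h (k * x)) x := fun x => by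
    have := ((hH (k * x)).comp x ((hasDerivAt_id x).const_mul k)).const_mul k⁻¹
    exact this.congr_deriv (by field_simp)
  rw [integral_mul_deriv_eq_deriv_mul (fun x _ => (hw.differentiable one_ne_zero x).hasDerivAt)
    (fun x _ => hv x) ((hw.continuous_deriv le_rfl).intervalIntegrable a b)
    ((hh.comp (continuous_const_mul k)).intervalIntegrable a b)]
  simp only [hwa, hwb, zero_mul, sub_zero, zero_sub, mul_left_comm (deriv w _) k⁻¹,
    integral_const_mul]

theorem abs_integral_mul_comp_mul_le (hk : k ≠ 0) (hw : ContDiff ℝ 1 w)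
    (hwa : w a = 0) (hwb : w b = 0) (hH : ∀ x, HasDerivAt H (h x) x) (hh : Continuous h)
    {M₁ M₂ : ℝ} (hM₁ : ∀ x, |deriv w x| ≤ M₁) (hM₂ : ∀ x, |H x| ≤ M₂) :
    |∫ s in a..b, w s * h (k * s)| ≤ M₁ * M₂ * |b - a| / |k| := by
  have hM₁_nonneg : 0 ≤ M₁ := (abs_nonneg _).trans (hM₁ 0)
  have hbound : |∫ s in a..b, deriv w s * H (k * s)| ≤ M₁ * M₂ * |b - a| := by
    rw [← Real.norm_eq_abs]
    refine norm_integral_le_of_norm_le_const fun x _ => ?_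
    rw [Real.norm_eq_abs, abs_mul]
    exact mul_le_mul (hM₁ x) (hM₂ _) (abs_nonneg _) hM₁_nonneg
  rw [integral_mul_comp_mul_eq_neg_inv_mul hk hw hwa hwb hH hh, abs_neg, abs_mul, abs_inv,
    inv_mul_eq_div]
  gcongr

end intervalIntegral

theorem C1_window_mean_zero_rate_general
    (h : ℝ → ℝ) (hc : Continuous h) (hper : Function.Periodic h 1)
    (hmean : (∫ s in (0:ℝ)..1, h s) = 0)
    (w : ℝ → ℝ) (hwC1 : ContDiff ℝ 1 w)
    (hw0 : ∀ s : ℝ, s ∉ Set.Ioo (0:ℝ) 1 → w s = 0)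
    (k : ℕ) (hk : 0 < k) :
    |∫ s in (0:ℝ)..1, w s * h (k * s)| ≤
      ((⨆ x : ℝ, |deriv w x|) * ⨆ x : ℝ, |∫ s in (0:ℝ)..x, h s|) / k := by
  set H : ℝ → ℝ := fun x => ∫ s in (0:ℝ)..x, h s
  have hH (x : ℝ) : HasDerivAt H (h x) x := (hc.integral_hasStrictDerivAt 0 x).hasDerivAt
  have hH_periodic : Function.Periodic H 1 :=
    hper.periodic_intervalIntegral_of_integral_eq_zero (hc.intervalIntegrable · ·) hmean
  -- `⨆` over `ℝ` of an unbounded family is `0`, so both suprema need bounded ranges.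
  have hH_cont : Continuous H := continuous_iff_continuousAt.2 fun x => (hH x).continuousAt
  have hH_bdd : BddAbove (range fun x => |H x|) :=
    ((hH_periodic.comp abs).compact_of_continuous one_ne_zero hH_cont.abs).bddAbove
  have hw_supp : HasCompactSupport w :=
    HasCompactSupport.intro isCompact_Icc fun x hx => hw0 x fun hx' => hx (Ioo_subset_Icc_self hx')
  have hw'_bdd : BddAbove (range fun x => |deriv w x|) :=
    (hwC1.continuous_deriv le_rfl).norm.bddAbove_range_of_hasCompactSupport hw_supp.deriv.norm
  simpa using intervalIntegral.abs_integral_mul_comp_mul_le (a := 0) (b := 1)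
    (Nat.cast_ne_zero.mpr hk.ne') hwC1 (hw0 0 (by simp)) (hw0 1 (by simp)) hH hc
    (le_ciSup hw'_bdd) (le_ciSup hH_bdd)

theorem C1_window_mean_zero_rate
    (h : ℝ → ℝ) (hc : Continuous h) (hper : Function.Periodic h 1)
    (hmean : (∫ s in (0:ℝ)..1, h s) = 0)
    (w : ℝ → ℝ) (hwC1 : ContDiff ℝ 1 w)
    (hw00 : w 0 = 0) (hw11 : w 1 = 0)
    (hw0 : ∀ s : ℝ, s ∉ Set.Ioo (0:ℝ) 1 → w s = 0)
    (hw1 : (∫ s in (0:ℝ)..1, w s) = 1)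
    (k : ℕ) (hk : 0 < k) :
    |∫ s in (0:ℝ)..1, w s * h (k * s)| ≤
      ((⨆ x : ℝ, |deriv w x|) * ⨆ x : ℝ, |∫ s in (0:ℝ)..x, h s|) / k :=
  C1_window_mean_zero_rate_general h hc hper hmean w hwC1 hw0 k hk
end

section
/- Let h be continuous and 1-periodic with mean zero, and let w be a windowing function of class C^l on ℝ (all derivatives up to order l vanish at 0 and 1, w vanishing outside (0,1)) whose l-th derivative is Lipschitz. Then |∫₀¹ w(s) h(ks) ds| = O(k^{-(l+1)}) as k → ∞ through the positive integers. -/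
/-!
Integrating by parts `l` times against mean-zero periodic primitives of `h` trades each derivative
of `w` for a factor `1/k`; the boundary terms vanish because the derivatives of `w` vanish at `0`
and `1`. The last factor `1/k` comes from the Lipschitz bound on `w⁽ˡ⁾`: on each of the `k`
periods `[j/k, (j+1)/k]` the periodic factor has mean zero, so `w⁽ˡ⁾` may be replaced by
`w⁽ˡ⁾ - w⁽ˡ⁾(j/k) = O(1/k)`.
-/

open Set MeasureTheory intervalIntegral Function

noncomputable def meanZeroPrimitive (f : ℝ → ℝ) (x : ℝ) : ℝ :=
  (∫ t in (0:ℝ)..x, f t) - ∫ y in (0:ℝ)..1, ∫ t in (0:ℝ)..y, f t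

section meanZeroPrimitive

variable {f : ℝ → ℝ}

theorem hasDerivAt_meanZeroPrimitive (hf : Continuous f) (x : ℝ) :
    HasDerivAt (meanZeroPrimitive f) (f x) x :=
  (hf.integral_hasStrictDerivAt 0 x).hasDerivAt.sub_const _

theorem continuous_meanZeroPrimitive (hf : Continuous f) : Continuous (meanZeroPrimitive f) :=
  continuous_iff_continuousAt.2 fun x => (hasDerivAt_meanZeroPrimitive hf x).continuousAt

theorem integral_meanZeroPrimitive (hf : Continuous f) :
    ∫ x in (0:ℝ)..1, meanZeroPrimitive f x = 0 := by
  simp only [meanZeroPrimitive]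
  rw [integral_sub
    ((continuous_primitive (fun a b => hf.intervalIntegrable a b) 0).intervalIntegrable 0 1)
    intervalIntegrable_const, intervalIntegral.integral_const]
  simp

theorem periodic_meanZeroPrimitive (hf : Continuous f) (hper : Periodic f 1)
    (hmean : ∫ x in (0:ℝ)..1, f x = 0) : Periodic (meanZeroPrimitive f) 1 := by
  intro x
  have hshift : ∫ t in (0:ℝ)..x + 1, f t = ∫ t in (0:ℝ)..x, f t := by
    rw [← integral_add_adjacent_intervals (hf.intervalIntegrable 0 x)
      (hf.intervalIntegrable x (x + 1)), hper.intervalIntegral_add_eq x 0, zero_add, hmean,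
      add_zero]
  simp only [meanZeroPrimitive, hshift]

theorem continuous_iterate_meanZeroPrimitive (hf : Continuous f) (n : ℕ) :
    Continuous (meanZeroPrimitive^[n] f) := by
  induction n with
  | zero => exact hf
  | succ n ih => rw [iterate_succ_apply']; exact continuous_meanZeroPrimitive ih

theorem integral_iterate_meanZeroPrimitive (hf : Continuous f)
    (hmean : ∫ x in (0:ℝ)..1, f x = 0) (n : ℕ) :
    ∫ x in (0:ℝ)..1, (meanZeroPrimitive^[n] f) x = 0 := by
  cases n with
  | zero => exact hmean
  | succ n =>
    rw [iterate_succ_apply']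
    exact integral_meanZeroPrimitive (continuous_iterate_meanZeroPrimitive hf n)

theorem periodic_iterate_meanZeroPrimitive (hf : Continuous f) (hper : Periodic f 1)
    (hmean : ∫ x in (0:ℝ)..1, f x = 0) (n : ℕ) : Periodic (meanZeroPrimitive^[n] f) 1 := by
  induction n with
  | zero => exact hper
  | succ n ih =>
    rw [iterate_succ_apply']
    exact periodic_meanZeroPrimitive (continuous_iterate_meanZeroPrimitive hf n) ih
      (integral_iterate_meanZeroPrimitive hf hmean n)

end meanZeroPrimitive

theorem integral_mul_comp_mul_eq_of_hasDerivAt {u u' F f : ℝ → ℝ} {a b k : ℝ}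
    (hu : ∀ x ∈ uIcc a b, HasDerivAt u (u' x) x) (hu' : IntervalIntegrable u' volume a b)
    (hF : ∀ x, HasDerivAt F (f x) x) (hf : Continuous f) (ha : u a = 0) (hb : u b = 0)
    (hk : k ≠ 0) :
    ∫ s in a..b, u s * f (k * s) = -k⁻¹ * ∫ s in a..b, u' s * F (k * s) := by
  have hv : ∀ x ∈ uIcc a b, HasDerivAt (fun s => k⁻¹ * F (k * s)) (f (k * x)) x := by
    intro x _
    refine (((hF (k * x)).comp x ((hasDerivAt_id x).const_mul k)).const_mul k⁻¹).congr_deriv ?_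
    field_simp
  rw [integral_mul_deriv_eq_deriv_mul hu hv hu'
    ((hf.comp (continuous_const.mul continuous_id)).intervalIntegrable a b), ha, hb]
  simp [mul_left_comm _ k⁻¹, intervalIntegral.integral_const_mul]

theorem integral_mul_comp_mul_eq_pow_mul_integral_iteratedDeriv {w h : ℝ → ℝ} {l : ℕ}
    {a b : ℝ} (hw : ContDiff ℝ l w)
    (hvanish : ∀ i < l, iteratedDeriv i w a = 0 ∧ iteratedDeriv i w b = 0)
    (hh : Continuous h) {k : ℝ} (hk : k ≠ 0) {i : ℕ} (hi : i ≤ l) :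
    ∫ s in a..b, w s * h (k * s) =
      (-k⁻¹) ^ i * ∫ s in a..b, iteratedDeriv i w s * (meanZeroPrimitive^[i] h) (k * s) := by
  induction i with
  | zero => simp
  | succ i ih =>
    have hil : i < l := hi
    have hu : ∀ x ∈ uIcc a b, HasDerivAt (iteratedDeriv i w) (iteratedDeriv (i + 1) w x) x :=
      fun x _ => iteratedDeriv_succ (f := w) ▸
        ((hw.differentiable_iteratedDeriv i (by exact_mod_cast hil)) x).hasDerivAt
    have hu' : IntervalIntegrable (iteratedDeriv (i + 1) w) volume a b :=
      (hw.continuous_iteratedDeriv (i + 1) (by exact_mod_cast hi)).intervalIntegrable a b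
    have hF : ∀ x, HasDerivAt (meanZeroPrimitive^[i + 1] h) ((meanZeroPrimitive^[i] h) x) x := by
      rw [iterate_succ_apply']
      exact hasDerivAt_meanZeroPrimitive (continuous_iterate_meanZeroPrimitive hh i)
    rw [ih hil.le, integral_mul_comp_mul_eq_of_hasDerivAt hu hu' hF
      (continuous_iterate_meanZeroPrimitive hh i) (hvanish i hil).1 (hvanish i hil).2 hk,
      pow_succ, mul_assoc]

theorem abs_integral_mul_le_of_integral_eq_zero {g φ : ℝ → ℝ} {a b M : ℝ} {K : NNReal}
    (hab : a ≤ b) (hg : LipschitzWith K g) (hφ : IntervalIntegrable φ volume a b)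
    (hφ0 : ∫ s in a..b, φ s = 0) (hM : ∀ s ∈ Ioc a b, |φ s| ≤ M) :
    |∫ s in a..b, g s * φ s| ≤ K * M * (b - a) ^ 2 := by
  have hrecenter : ∫ s in a..b, g s * φ s = ∫ s in a..b, (g s - g a) * φ s := by
    simp only [sub_mul]
    rw [integral_sub (hφ.continuousOn_mul hg.continuous.continuousOn)
      (hφ.continuousOn_mul continuousOn_const), intervalIntegral.integral_const_mul, hφ0,
      mul_zero, sub_zero]
  have hbound : ∀ s ∈ uIoc a b, ‖(g s - g a) * φ s‖ ≤ K * (b - a) * M := by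
    intro s hs
    rw [uIoc_of_le hab] at hs
    have hgs : |g s - g a| ≤ K * (b - a) := by
      have := hg.dist_le_mul s a
      rw [Real.dist_eq, Real.dist_eq, abs_of_nonneg (sub_nonneg.2 hs.1.le)] at this
      exact this.trans (by gcongr; exact hs.2)
    rw [Real.norm_eq_abs, abs_mul]
    exact mul_le_mul hgs (hM s hs) (abs_nonneg _)
      (mul_nonneg K.coe_nonneg (sub_nonneg.2 hab))
  have := norm_integral_le_of_norm_le_const hbound
  rw [Real.norm_eq_abs, abs_of_nonneg (sub_nonneg.2 hab)] at this
  rw [hrecenter]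
  exact this.trans_eq (by ring)

theorem integral_comp_mul_eq_zero_of_periodic {F : ℝ → ℝ} (hper : Periodic F 1)
    (hmean : ∫ x in (0:ℝ)..1, F x = 0) {k : ℝ} (hk : k ≠ 0) (j : ℝ) :
    ∫ s in j / k..(j + 1) / k, F (k * s) = 0 := by
  rw [intervalIntegral.integral_comp_mul_left F hk, mul_div_cancel₀ _ hk, mul_div_cancel₀ _ hk,
    hper.intervalIntegral_add_eq j 0, zero_add, hmean, smul_zero]

theorem abs_integral_mul_comp_mul_le {g F : ℝ → ℝ} {K : NNReal} {M : ℝ}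
    (hg : LipschitzWith K g) (hF : Continuous F) (hper : Periodic F 1)
    (hmean : ∫ x in (0:ℝ)..1, F x = 0) (hM : ∀ x, |F x| ≤ M) {k : ℕ} (hk : 0 < k) :
    |∫ s in (0:ℝ)..1, g s * F (k * s)| ≤ K * M / k := by
  have hk' : (0:ℝ) < k := by exact_mod_cast hk
  have hFk : Continuous fun s : ℝ => F (k * s) := hF.comp (continuous_const.mul continuous_id)
  have hchunk : ∀ j : ℕ, |∫ s in (j:ℝ) / k..((j + 1 : ℕ) : ℝ) / k, g s * F (k * s)| ≤
      K * M * (k:ℝ)⁻¹ ^ 2 := by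
    intro j
    have hlen : ((j + 1 : ℕ) : ℝ) / k - j / k = (k:ℝ)⁻¹ := by push_cast; field_simp; ring
    rw [← hlen]
    refine abs_integral_mul_le_of_integral_eq_zero (by gcongr; simp) hg
      (hFk.intervalIntegrable _ _) ?_ fun s _ => hM _
    exact_mod_cast integral_comp_mul_eq_zero_of_periodic hper hmean hk'.ne' j
  have hsplit : ∫ s in (0:ℝ)..1, g s * F (k * s) =
      ∑ j ∈ Finset.range k,
        ∫ s in (j:ℝ) / k..((j + 1 : ℕ) : ℝ) / k, g s * F (k * s) := by
    rw [sum_integral_adjacent_intervals (f := fun s => g s * F (k * s))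
      (a := fun j : ℕ => (j:ℝ) / k) fun j _ => (hg.continuous.mul hFk).intervalIntegrable _ _]
    simp [hk'.ne']
  calc |∫ s in (0:ℝ)..1, g s * F (k * s)|
      ≤ ∑ j ∈ Finset.range k,
          |∫ s in (j:ℝ) / k..((j + 1 : ℕ) : ℝ) / k, g s * F (k * s)| := by
        rw [hsplit]; exact Finset.abs_sum_le_sum_abs _ _
    _ ≤ ∑ _j ∈ Finset.range k, K * M * (k:ℝ)⁻¹ ^ 2 :=
        Finset.sum_le_sum fun j _ => hchunk j
    _ = K * M / k := by simp only [Finset.sum_const, Finset.card_range, nsmul_eq_mul]; field_simp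

theorem Cl_window_rate_general
    (h : ℝ → ℝ) (hc : Continuous h) (hper : Function.Periodic h 1)
    (hmean : (∫ s in (0:ℝ)..1, h s) = 0)
    (l : ℕ) (w : ℝ → ℝ) (hwCl : ContDiff ℝ l w)
    (K : NNReal) (hlip : LipschitzWith K (iteratedDeriv l w))
    (hvanish : ∀ i : ℕ, i ≤ l → iteratedDeriv i w 0 = 0 ∧ iteratedDeriv i w 1 = 0) :
    ∃ C : ℝ, ∀ k : ℕ, 0 < k →
      |∫ s in (0:ℝ)..1, w s * h (k * s)| ≤ C / (k : ℝ) ^ (l + 1) := by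
  set P := meanZeroPrimitive^[l] h
  have hPc : Continuous P := continuous_iterate_meanZeroPrimitive hc l
  have hPper : Periodic P 1 := periodic_iterate_meanZeroPrimitive hc hper hmean l
  obtain ⟨M, hM⟩ :=
    isBounded_iff_forall_norm_le.1 (hPper.isBounded_of_continuous one_ne_zero hPc)
  refine ⟨K * M, fun k hk => ?_⟩
  have hk' : (0:ℝ) < k := by exact_mod_cast hk
  rw [integral_mul_comp_mul_eq_pow_mul_integral_iteratedDeriv hwCl (fun i hi => hvanish i hi.le)
    hc hk'.ne' le_rfl, abs_mul, abs_pow, abs_neg, abs_inv, abs_of_pos hk']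
  calc (k:ℝ)⁻¹ ^ l * |∫ s in (0:ℝ)..1, iteratedDeriv l w s * P (k * s)|
      ≤ (k:ℝ)⁻¹ ^ l * (K * M / k) := by
        gcongr
        exact abs_integral_mul_comp_mul_le hlip hPc hPper
          (integral_iterate_meanZeroPrimitive hc hmean l) (fun x => hM _ ⟨x, rfl⟩) hk
    _ = K * M / (k:ℝ) ^ (l + 1) := by rw [inv_pow, pow_succ]; field_simp

theorem Cl_window_rate
    (h : ℝ → ℝ) (hc : Continuous h) (hper : Function.Periodic h 1)
    (hmean : (∫ s in (0:ℝ)..1, h s) = 0)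
    (l : ℕ) (w : ℝ → ℝ) (hwCl : ContDiff ℝ l w)
    (K : NNReal) (hlip : LipschitzWith K (iteratedDeriv l w))
    (hvanish : ∀ i : ℕ, i ≤ l → iteratedDeriv i w 0 = 0 ∧ iteratedDeriv i w 1 = 0)
    (hw0 : ∀ s : ℝ, s ∉ Set.Ioo (0:ℝ) 1 → w s = 0)
    (hw1 : (∫ s in (0:ℝ)..1, w s) = 1) :
    ∃ C : ℝ, ∀ k : ℕ, 0 < k →
      |∫ s in (0:ℝ)..1, w s * h (k * s)| ≤ C / (k : ℝ) ^ (l + 1) :=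
  Cl_window_rate_general h hc hper hmean l w hwCl K hlip hvanish
end
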